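/- Let F be a commutative ring, let G be a finite group whose commutator subgroup is contained in its center Z = Z(G), and let Σ_Z denote the element ∑_{z ∈ Z} z of the group algebra F[G]. Then for every x ∈ F[G], the element x · Σ_Z lies in the center of F[G]; that is, the left ideal F[G] · Σ_Z is contained in the center of F[G]. -/

import Mathlib

/-!
Write `Σ_H = ∑_{h ∈ H} h` for a finite subgroup `H` of `G`. Left multiplication by `g` maps `Σ_H` to
the coset sum `Σ_{gH}`, so `g Σ_H` depends only on the coset `gH`; for normal `H` this also equals
`Σ_H g`, i.e. `Σ_H` is central. If moreover `H` contains the commutator subgroup, then `gh` and `hg`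
lie in the same coset of `H`, so `g h Σ_H = h g Σ_H`. By bilinearity `x y Σ_H = y x Σ_H` for all
`x, y ∈ F[G]`, which together with the centrality of `Σ_H` says that `x Σ_H` is central. The center
`Z(G)` is such an `H` by hypothesis.
-/

/-- A ring `R` is *centrally essential* if for every nonzero `r ∈ R` there is a central
element `c` such that `c * r` is a nonzero central element. -/
def IsCentrallyEssential (R : Type*) [Ring R] : Prop :=
  ∀ r : R, r ≠ 0 → ∃ c ∈ Subring.center R, c * r ≠ 0 ∧ c * r ∈ Subring.center R

theorem Subgroup.normal_of_commutator_le {G : Type*} [Group G] {H : Subgroup G}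
    (hH : _root_.commutator G ≤ H) : H.Normal :=
  commutator_top_left_le_iff.mp ((commutator_mono le_rfl le_top).trans hH)

namespace MonoidAlgebra

variable {k G : Type*} [CommSemiring k]

theorem commute_of_forall_commute_of [Monoid G] {x y : MonoidAlgebra k G}
    (h : ∀ g, Commute (of k G g) y) : Commute x y := by
  induction x using MonoidAlgebra.induction_on with
  | of g => exact h g
  | add a b ha hb => exact ha.add_left hb
  | smul r a ha => exact ha.smul_left r

variable [Group G]

noncomputable def subgroupSum (H : Subgroup G) [Fintype H] : MonoidAlgebra k G :=
  ∑ h : H, of k G h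

variable {H : Subgroup G} [Fintype H]

theorem of_mul_subgroupSum_of_mem {z : G} (hz : z ∈ H) :
    of k G z * subgroupSum H = subgroupSum H := by
  rw [subgroupSum, Finset.mul_sum]
  exact Fintype.sum_equiv (Equiv.mulLeft ⟨z, hz⟩) _ _ fun h ↦ (map_mul _ _ _).symm

theorem of_mul_subgroupSum_eq {a b : G} (hab : a⁻¹ * b ∈ H) :
    of k G a * subgroupSum H = of k G b * subgroupSum H := by
  rw [← mul_inv_cancel_left a b, map_mul, mul_assoc, of_mul_subgroupSum_of_mem hab]

theorem commute_of_subgroupSum [H.Normal] (g : G) :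
    Commute (of k G g) (subgroupSum (k := k) H) := by
  simp only [Commute, SemiconjBy, subgroupSum, Finset.mul_sum, Finset.sum_mul, ← map_mul]
  exact Fintype.sum_equiv (MulAut.conjNormal g).toEquiv _ _ fun h ↦ by
    simp [MulAut.conjNormal_apply]

theorem commute_subgroupSum [H.Normal] (x : MonoidAlgebra k G) :
    Commute x (subgroupSum H) :=
  commute_of_forall_commute_of commute_of_subgroupSum

open scoped commutatorElement in
theorem of_mul_of_mul_subgroupSum_comm (hH : commutator G ≤ H) (g h : G) :
    of k G g * of k G h * subgroupSum H = of k G h * of k G g * subgroupSum H := by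
  simp only [← map_mul]
  refine of_mul_subgroupSum_eq (hH ?_)
  rw [show (g * h)⁻¹ * (h * g) = ⁅h⁻¹, g⁻¹⁆ by group]
  exact Subgroup.commutator_mem_commutator (Subgroup.mem_top _) (Subgroup.mem_top _)

theorem mul_mul_subgroupSum_comm (hH : commutator G ≤ H) (x y : MonoidAlgebra k G) :
    x * y * subgroupSum H = y * x * subgroupSum H := by
  induction x using MonoidAlgebra.induction_on with
  | of g =>
    induction y using MonoidAlgebra.induction_on with
    | of h => exact of_mul_of_mul_subgroupSum_comm hH g h
    | add a b ha hb => simp only [mul_add, add_mul, ha, hb]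
    | smul r a ha => simp only [mul_smul_comm, smul_mul_assoc, ha]
  | add a b ha hb => simp only [mul_add, add_mul, ha, hb]
  | smul r a ha => simp only [mul_smul_comm, smul_mul_assoc, ha]

theorem mul_subgroupSum_mem_center (hH : commutator G ≤ H) (x : MonoidAlgebra k G) :
    x * subgroupSum H ∈ Set.center (MonoidAlgebra k G) := by
  have := Subgroup.normal_of_commutator_le hH
  refine Semigroup.mem_center_iff.mpr fun y ↦ ?_
  rw [← mul_assoc, mul_mul_subgroupSum_comm hH, mul_assoc, (commute_subgroupSum y).eq, mul_assoc]

end MonoidAlgebra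

theorem mul_sum_center_mem_center
    (F : Type*) [CommRing F] (G : Type*) [Group G] [Fintype G] [DecidableEq G]
    (hG : commutator G ≤ Subgroup.center G) (x : MonoidAlgebra F G) :
    x * (∑ z : Subgroup.center G, MonoidAlgebra.of F G (z : G)) ∈
      Subring.center (MonoidAlgebra F G) :=
  MonoidAlgebra.mul_subgroupSum_mem_center hG x
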